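/- arXiv:1912.09984 — 2 statements merged into one kernel-verified Lean document; each statement's English description precedes it below -/
import Mathlib

section
/- Let C be an [n,k;n_1,…,n_ℓ] sum-rank metric code over (F;K_1,…,K_ℓ) and M_C = (K^n, ρ_C) the associated sum-matroid. Then for every i = 1,…,k, the i-th generalized weight of the sum-matroid equals the i-th generalized sum-rank weight of the code: d_i(M_C) = d_{SR,i}(C). -/
open Module

/-! Setup for sum-rank metric codes and sum-matroids.

We fix `ℓ` finite fields `K i` with a common extension `F` (given by algebra
structures), and block lengths `nv i`.  The ambient space `F^n` (with
`n = ∑ i, nv i`) is modelled as the dependent product of the blocks `F^{nv i}`,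
and an element of the product lattice `P(K^n)` is a tuple of `K i`-subspaces of
`K i ^ (nv i)`. -/

/-- The ambient space `F^n`, split into `ℓ` blocks of sizes `nv i`. -/
abbrev SRAmb (ℓ : ℕ) (nv : Fin ℓ → ℕ) (F : Type) : Type :=
  (i : Fin ℓ) → Fin (nv i) → F

/-- The product lattice `P(K^n)`: tuples `L` where `L i` is a `K i`-subspace of
`K i ^ (nv i)`. -/
abbrev SRLat (ℓ : ℕ) (nv : Fin ℓ → ℕ) (K : Fin ℓ → Type) [∀ i, Field (K i)] : Type :=
  (i : Fin ℓ) → Submodule (K i) (Fin (nv i) → K i)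

variable {ℓ : ℕ} {nv : Fin ℓ → ℕ} {F : Type} [Field F]
  {K : Fin ℓ → Type} [∀ i, Field (K i)] [∀ i, Algebra (K i) F]

/-- `Rk(L) = ∑ i, dim_{K i} (L i)`. -/
noncomputable def SRrk (L : SRLat ℓ nv K) : ℕ := ∑ i, finrank (K i) (L i)

/-- Orthogonal complement of a subspace of `k^m` with respect to the standard
dot product. -/
def SRorth {k : Type} [Field k] {m : ℕ} (W : Submodule k (Fin m → k)) :
    Submodule k (Fin m → k) where
  carrier := {v | ∀ w ∈ W, ∑ t, v t * w t = 0}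
  zero_mem' := by intro w hw; simp
  add_mem' := by
    intro a b ha hb w hw
    have h : ∑ t, (a + b) t * w t = (∑ t, a t * w t) + ∑ t, b t * w t := by
      simp [add_mul, Finset.sum_add_distrib]
    rw [h, ha w hw, hb w hw, add_zero]
  smul_mem' := by
    intro c a ha w hw
    have h : ∑ t, (c • a) t * w t = c * ∑ t, a t * w t := by
      simp [Finset.mul_sum, mul_assoc]
    rw [h, ha w hw, mul_zero]

/-- Componentwise orthogonal complement `L^⊥` in the lattice `P(K^n)`. -/
def SRlatPerp (L : SRLat ℓ nv K) : SRLat ℓ nv K := fun i => SRorth (L i)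

/-- The `i`-th component of the sum-rank support of `c ∈ F^n`: the `K i`-row
space of the coordinate matrix of the `i`-th block of `c` (described
basis-freely as the span of the images of the block of `c` under all
`K i`-linear functionals `F → K i`). -/
def SRsupp (c : SRAmb ℓ nv F) (i : Fin ℓ) : Submodule (K i) (Fin (nv i) → K i) :=
  Submodule.span (K i) {v | ∃ f : F →ₗ[K i] K i, v = fun t => f (c i t)}

/-- The sum-rank weight `srank(c) = Rk(supp(c))`. -/
noncomputable def SRwt (c : SRAmb ℓ nv F) : ℕ :=
  ∑ i, finrank (K i) (SRsupp (K := K) c i)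

/-- The sum-rank support space `V_L = {c ∈ F^n : supp(c) ⊆ L}`. -/
def SRVL (L : SRLat ℓ nv K) : Submodule F (SRAmb ℓ nv F) where
  carrier := {c | ∀ i, SRsupp (K := K) c i ≤ L i}
  zero_mem' := by
    intro i
    apply Submodule.span_le.mpr
    rintro v ⟨f, rfl⟩
    have h : (fun t => f ((0 : SRAmb ℓ nv F) i t)) = (0 : Fin (nv i) → K i) := by
      funext t; simp
    rw [h]
    exact (L i).zero_mem
  add_mem' := by
    intro a b ha hb i
    apply Submodule.span_le.mpr
    rintro v ⟨f, rfl⟩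
    have h : (fun t => f ((a + b) i t)) =
        (fun t => f (a i t)) + fun t => f (b i t) := by
      funext t; simp
    rw [h]
    exact (L i).add_mem (ha i (Submodule.subset_span ⟨f, rfl⟩))
      (hb i (Submodule.subset_span ⟨f, rfl⟩))
  smul_mem' := by
    intro x a ha i
    apply Submodule.span_le.mpr
    rintro v ⟨f, rfl⟩
    have h : (fun t => f ((x • a) i t)) =
        fun t => (f.comp (LinearMap.mulLeft (K i) x)) (a i t) := by
      funext t; simp [smul_eq_mul]
    rw [h]
    exact ha i (Submodule.subset_span ⟨_, rfl⟩)

/-- The dual code `C^⊥` with respect to the standard bilinear form on `F^n`. -/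
def SRdual (C : Submodule F (SRAmb ℓ nv F)) : Submodule F (SRAmb ℓ nv F) where
  carrier := {x | ∀ c ∈ C, ∑ i, ∑ t, x i t * c i t = 0}
  zero_mem' := by intro c hc; simp
  add_mem' := by
    intro a b ha hb c hc
    have h : ∑ i, ∑ t, (a + b) i t * c i t =
        (∑ i, ∑ t, a i t * c i t) + ∑ i, ∑ t, b i t * c i t := by
      simp [add_mul, Finset.sum_add_distrib]
    rw [h, ha c hc, hb c hc, add_zero]
  smul_mem' := by
    intro x a ha c hc
    have h : ∑ i, ∑ t, (x • a) i t * c i t = x * ∑ i, ∑ t, a i t * c i t := by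
      simp [Finset.mul_sum, mul_assoc]
    rw [h, ha c hc, mul_zero]

/-- `C(L) = {c ∈ C^⊥ : supp(c) ⊆ L^⊥} = C^⊥ ∩ V_{L^⊥}`. -/
def SRCL (C : Submodule F (SRAmb ℓ nv F)) (L : SRLat ℓ nv K) :
    Submodule F (SRAmb ℓ nv F) :=
  SRdual C ⊓ SRVL (SRlatPerp L)

/-- The projection `Π_L : F^n → F^{Rk L}`, `x ↦ x Aᵀ`, where
`A = diag(A_1, …, A_ℓ)` and `A_i` is the matrix whose rows are the chosen basis
of `L i` over `K i`.  The target `F^{Rk L}` is indexed blockwise. -/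
noncomputable def SRpi (L : SRLat ℓ nv K) :
    SRAmb ℓ nv F →ₗ[F] ((i : Fin ℓ) → Fin (finrank (K i) (L i)) → F) where
  toFun x := fun i j =>
    ∑ t, x i t * algebraMap (K i) F ((Module.finBasis (K i) (L i) j).val t)
  map_add' x y := by
    funext i j
    simp [add_mul, Finset.sum_add_distrib]
  map_smul' a x := by
    funext i j
    simp [Finset.mul_sum, mul_assoc]

/-- The rank function `ρ_C(L) = dim_F Π_L(C^⊥)` of the sum-matroid associated
to the code `C`. -/
noncomputable def SRrho (C : Submodule F (SRAmb ℓ nv F)) (L : SRLat ℓ nv K) : ℕ :=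
  finrank F (Submodule.map (SRpi (F := F) L) (SRdual C))

/-- Minimum sum-rank distance of a code. -/
noncomputable def SRminDist (K : Fin ℓ → Type) [∀ i, Field (K i)]
    [∀ i, Algebra (K i) F] (C : Submodule F (SRAmb ℓ nv F)) : ℕ :=
  sInf {w | ∃ c ∈ C, c ≠ 0 ∧ SRwt (K := K) c = w}

/-- The `r`-th generalized sum-rank weight
`d_{SR,r}(C) = min{Rk L : dim_F (C ∩ V_L) ≥ r}`. -/
noncomputable def SRdgw (K : Fin ℓ → Type) [∀ i, Field (K i)]
    [∀ i, Algebra (K i) F] (C : Submodule F (SRAmb ℓ nv F)) (r : ℕ) : ℕ :=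
  sInf {w | ∃ L : SRLat ℓ nv K, r ≤ finrank F ↥(C ⊓ SRVL L) ∧ SRrk L = w}

/-- The sum-matroid axioms (R1), (R2), (R3) for a function `ρ : P(K^n) → ℕ`. -/
def IsSumMatroid (ρ : SRLat ℓ nv K → ℕ) : Prop :=
  (∀ L, ρ L ≤ SRrk L) ∧
  (∀ L L' : SRLat ℓ nv K, L ≤ L' → ρ L ≤ ρ L') ∧
  (∀ L L' : SRLat ℓ nv K, ρ (L ⊔ L') + ρ (L ⊓ L') ≤ ρ L + ρ L')

/-- The dual rank function `ρ*(L) = ρ(L^⊥) + Rk L − ρ(K^n)`. -/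
noncomputable def SRdualRk (ρ : SRLat ℓ nv K → ℕ) (L : SRLat ℓ nv K) : ℕ :=
  ρ (SRlatPerp L) + SRrk L - ρ ⊤

/-- The nullity function `η(L) = Rk L − ρ(L)`. -/
noncomputable def SReta (ρ : SRLat ℓ nv K → ℕ) (L : SRLat ℓ nv K) : ℕ :=
  SRrk L - ρ L

/-- The `i`-th generalized weight of a sum-matroid,
`d_i(M) = min{Rk L : η(L) = i}`. -/
noncomputable def SRgw (ρ : SRLat ℓ nv K → ℕ) (i : ℕ) : ℕ :=
  sInf {w | ∃ L : SRLat ℓ nv K, SReta ρ L = i ∧ SRrk L = w}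

/-! The map `Π_L` is the transpose of a parametrisation `Φ_L` of `V_L` (a `K_i`-basis of `L_i`
stays `F`-linearly independent), so `ker Π_L = V_L^⊥` and `dim V_L = Rk L`. Hence
`ρ_C(L) = dim C^⊥ - dim (C + V_L)^⊥ = Rk L - dim (C ∩ V_L)`, i.e. the nullity `η_C(L)` is
`dim (C ∩ V_L)`. The two minima then agree because lowering `Rk L` by one lowers
`dim (C ∩ V_L)` by at most one: any `L` with `dim (C ∩ V_L) ≥ i` can be shrunk to some `L'`
with `dim (C ∩ V_L') = i` exactly. -/

section LinearAlgebra

variable {k V W : Type*} [Field k] [AddCommGroup V] [Module k V] [AddCommGroup W] [Module k W]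

theorem LinearMap.IsAdjointPair.ker_eq_orthogonal_range {B : LinearMap.BilinForm k V}
    {B' : LinearMap.BilinForm k W} (hB' : B'.SeparatingRight)
    {f : W →ₗ[k] V} {g : V →ₗ[k] W} (h : LinearMap.IsAdjointPair B' B f g) :
    LinearMap.ker g = B.orthogonal (LinearMap.range f) := by
  ext x
  simp only [LinearMap.mem_ker, LinearMap.BilinForm.mem_orthogonal_iff, LinearMap.mem_range,
    forall_exists_index, forall_apply_eq_imp_iff, h _ x]
  exact ⟨fun hx y => by rw [hx, map_zero], hB' _⟩

theorem Submodule.finrank_map_add_finrank_inf_ker [FiniteDimensional k V] (f : V →ₗ[k] W)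
    (p : Submodule k V) :
    finrank k (p.map f) + finrank k ↥(p ⊓ LinearMap.ker f) = finrank k p := by
  have h := LinearMap.finrank_range_add_finrank_ker (f.domRestrict p)
  rwa [LinearMap.range_domRestrict, LinearMap.ker_domRestrict,
    ← Submodule.finrank_map_subtype_eq, Submodule.map_comap_subtype] at h

theorem Submodule.finrank_inf_add_finrank_le_of_le [FiniteDimensional k V]
    (p : Submodule k V) {q r : Submodule k V} (hqr : q ≤ r) :
    finrank k ↥(p ⊓ r) + finrank k q ≤ finrank k ↥(p ⊓ q) + finrank k r := by
  have h := Submodule.finrank_sup_add_finrank_inf_eq (p ⊓ r) q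
  rw [inf_assoc, inf_eq_right.mpr hqr] at h
  have : finrank k ↥(p ⊓ r ⊔ q) ≤ finrank k r :=
    Submodule.finrank_mono (sup_le inf_le_right hqr)
  omega

theorem Submodule.exists_le_finrank_eq (p : Submodule k V) [FiniteDimensional k p] {n : ℕ}
    (hn : n ≤ finrank k p) : ∃ q ≤ p, finrank k q = n := by
  let b := Module.finBasis k p
  refine ⟨span k (Set.range (p.subtype ∘ b ∘ Fin.castLE hn)), ?_, ?_⟩
  · exact span_le.mpr (Set.range_subset_iff.mpr fun j => (b _).2)
  · rw [finrank_span_eq_card ((b.linearIndependent.comp _ (Fin.castLE_injective hn)).map'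
      p.subtype p.ker_subtype), Fintype.card_fin]

end LinearAlgebra

theorem forall_dual_comp_mem_iff_mem_span {k E ι κ : Type*} [Field k] [Field E] [Algebra k E]
    [FiniteDimensional k E] {W : Submodule k (ι → k)} {v : κ → ι → k}
    (hv : Submodule.span k (Set.range v) = W) (c : ι → E) :
    (∀ f : E →ₗ[k] k, (fun t => f (c t)) ∈ W) ↔
      c ∈ Submodule.span E (Set.range fun j t => algebraMap k E (v j t)) := by
  set U := Submodule.span E (Set.range fun j t => algebraMap k E (v j t))
  constructor
  · intro h
    have hW : W ≤ (U.restrictScalars k).comap ((Algebra.linearMap k E).compLeft ι) := by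
      rw [← hv, Submodule.span_le]
      rintro _ ⟨j, rfl⟩
      exact Submodule.subset_span ⟨j, rfl⟩
    let e := Module.finBasis k E
    have hc : c = ∑ s, e s • fun t => algebraMap k E (e.coord s (c t)) := by
      funext t
      conv_lhs => rw [← e.sum_repr (c t)]
      simp [Finset.sum_apply, Algebra.smul_def, mul_comm]
    rw [hc]
    exact U.sum_mem fun s _ => U.smul_mem _ (hW (h (e.coord s)))
  · intro hc f
    induction hc using Submodule.span_induction generalizing f with
    | mem x hx =>
      obtain ⟨j, rfl⟩ := hx
      have : (fun t => f (algebraMap k E (v j t))) = f 1 • v j := by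
        funext t
        simp [Algebra.algebraMap_eq_smul_one, mul_comm]
      rw [this, ← hv]
      exact Submodule.smul_mem _ _ (Submodule.subset_span ⟨j, rfl⟩)
    | zero =>
      simp only [Pi.zero_apply, map_zero]
      exact W.zero_mem
    | add x y _ _ hx hy =>
      convert W.add_mem (hx f) (hy f) using 1
      funext t
      simp
    | smul a x _ hx => exact hx (f ∘ₗ LinearMap.mulLeft k a)

section BlockDot

variable {k ι : Type*} [Field k] [Fintype ι] {κ : ι → Type*} [∀ i, Fintype (κ i)]

def blockDot : LinearMap.BilinForm k ((i : ι) → κ i → k) :=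
  LinearMap.mk₂ k (fun x y => ∑ i, ∑ t, x i t * y i t)
    (fun _ _ _ => by simp only [Pi.add_apply, add_mul, Finset.sum_add_distrib])
    (fun _ _ _ => by simp only [Pi.smul_apply, smul_eq_mul, mul_assoc, Finset.mul_sum])
    (fun _ _ _ => by simp only [Pi.add_apply, mul_add, Finset.sum_add_distrib])
    (fun _ _ _ => by simp only [Pi.smul_apply, smul_eq_mul, mul_left_comm, Finset.mul_sum])

theorem blockDot_apply (x y : (i : ι) → κ i → k) :
    blockDot x y = ∑ i, ∑ t, x i t * y i t := rfl

theorem blockDot_comm (x y : (i : ι) → κ i → k) : blockDot x y = blockDot y x := by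
  simp only [blockDot_apply, mul_comm]

theorem blockDot_nondegenerate :
    (blockDot : LinearMap.BilinForm k ((i : ι) → κ i → k)).Nondegenerate := by
  classical
  have hsep : (blockDot : LinearMap.BilinForm k ((i : ι) → κ i → k)).SeparatingLeft := by
    intro x hx
    funext i t
    have h := hx (Pi.single i (Pi.single t 1))
    rw [blockDot_apply, Finset.sum_eq_single i (fun j _ hj => by simp [Pi.single_eq_of_ne hj])
      (by simp)] at h
    simpa [Pi.single_apply] using h
  exact ⟨hsep, fun y hy => hsep y fun x => by rw [blockDot_comm]; exact hy x⟩

end BlockDot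

/-- The rows of the matrix `A_i` defining `Π_L`, viewed in `F^{nv i}`. -/
noncomputable def SRbasisRow (L : SRLat ℓ nv K) (i : Fin ℓ) (j : Fin (finrank (K i) (L i))) :
    Fin (nv i) → F :=
  fun t => algebraMap (K i) F ((Module.finBasis (K i) (L i) j).val t)

noncomputable def SRlinComb (L : SRLat ℓ nv K) :
    ((i : Fin ℓ) → Fin (finrank (K i) (L i)) → F) →ₗ[F] SRAmb ℓ nv F :=
  LinearMap.piMap fun i => Fintype.linearCombination F (SRbasisRow L i)

theorem isAdjointPair_SRlinComb_SRpi (L : SRLat ℓ nv K) :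
    LinearMap.IsAdjointPair blockDot blockDot (SRlinComb (F := F) L) (SRpi L) := by
  intro y x
  simp only [blockDot_apply, SRlinComb, SRpi, LinearMap.coe_piMap, Pi.map_apply,
    Fintype.linearCombination_apply, LinearMap.coe_mk, AddHom.coe_mk, Finset.sum_apply,
    Pi.smul_apply, smul_eq_mul, Finset.sum_mul, Finset.mul_sum]
  refine Finset.sum_congr rfl fun i _ => Finset.sum_comm.trans ?_
  simp only [SRbasisRow, mul_comm, mul_left_comm]

theorem linearIndependent_SRbasisRow (L : SRLat ℓ nv K) (i : Fin ℓ) :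
    LinearIndependent F (SRbasisRow (F := F) L i) := by
  have hli := (Module.finBasis (K i) (L i)).linearIndependent.map' _ (L i).ker_subtype
  exact linearIndependent_algebraMap_comp_iff.mpr hli

theorem injective_SRlinComb (L : SRLat ℓ nv K) : Function.Injective (SRlinComb (F := F) L) :=
  Function.Injective.piMap fun i =>
    linearIndependent_iff_injective_fintypeLinearCombination.mp (linearIndependent_SRbasisRow L i)

theorem SRdual_eq_orthogonal (C : Submodule F (SRAmb ℓ nv F)) :
    SRdual C = blockDot.orthogonal C := by
  ext x
  simp only [LinearMap.BilinForm.mem_orthogonal_iff, blockDot_comm _ x]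
  rfl

theorem finrank_SRdual_add_finrank (C : Submodule F (SRAmb ℓ nv F)) :
    finrank F (SRdual C) + finrank F C = finrank F (SRAmb ℓ nv F) := by
  rw [SRdual_eq_orthogonal, LinearMap.BilinForm.finrank_orthogonal blockDot_nondegenerate]
  have := Submodule.finrank_le C
  omega

theorem SRdual_sup (C D : Submodule F (SRAmb ℓ nv F)) :
    SRdual (C ⊔ D) = SRdual C ⊓ SRdual D := by
  have hle (N : Submodule F (SRAmb ℓ nv F)) (x : SRAmb ℓ nv F) :
      x ∈ SRdual N ↔ N ≤ LinearMap.ker (blockDot x) := by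
    simp only [SRdual_eq_orthogonal, LinearMap.BilinForm.mem_orthogonal_iff, SetLike.le_def,
      LinearMap.mem_ker, blockDot_comm _ x]
  ext x
  simp only [Submodule.mem_inf, hle, sup_le_iff]

theorem SRVL_mono {L L' : SRLat ℓ nv K} (h : L ≤ L') : SRVL (F := F) L ≤ SRVL L' :=
  fun _ hc i => (hc i).trans (h i)

theorem exists_le_SRrk_add_one_eq {L : SRLat ℓ nv K} (h : 0 < SRrk L) :
    ∃ L' ≤ L, SRrk L' + 1 = SRrk L := by
  classical
  obtain ⟨j, -, hj⟩ := Finset.sum_pos_iff.mp h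
  obtain ⟨N, hNL, hN⟩ := (L j).exists_le_finrank_eq (Nat.sub_le (finrank (K j) (L j)) 1)
  refine ⟨Function.update L j N, update_le_iff.mpr ⟨hNL, fun _ _ => le_rfl⟩, ?_⟩
  unfold SRrk
  rw [← Finset.add_sum_erase _ _ (Finset.mem_univ j),
    ← Finset.add_sum_erase _ _ (Finset.mem_univ j),
    Finset.sum_congr rfl fun i hi => by rw [Function.update_of_ne (Finset.ne_of_mem_erase hi)],
    Function.update_self, hN]
  omega

section FiniteExtension

variable [∀ i, FiniteDimensional (K i) F]

theorem mem_SRVL_iff {L : SRLat ℓ nv K} {x : SRAmb ℓ nv F} :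
    x ∈ SRVL L ↔ ∀ i, x i ∈ Submodule.span F (Set.range (SRbasisRow L i)) := by
  refine forall_congr' fun i => ?_
  have hspan := congr_arg (Submodule.map (L i).subtype) (Module.finBasis (K i) (L i)).span_eq
  rw [Submodule.map_span, Submodule.map_top, Submodule.range_subtype, ← Set.range_comp] at hspan
  rw [SRsupp, Submodule.span_le]
  refine Iff.trans ?_ (forall_dual_comp_mem_iff_mem_span hspan (x i))
  exact ⟨fun h f => h ⟨f, rfl⟩, by rintro h _ ⟨f, rfl⟩; exact h f⟩

theorem range_SRlinComb (L : SRLat ℓ nv K) :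
    LinearMap.range (SRlinComb (F := F) L) = SRVL L := by
  ext x
  simp only [mem_SRVL_iff, ← Fintype.range_linearCombination, LinearMap.mem_range]
  constructor
  · rintro ⟨y, rfl⟩ i
    exact ⟨y i, rfl⟩
  · intro h
    choose y hy using h
    exact ⟨y, funext hy⟩

theorem finrank_SRVL (L : SRLat ℓ nv K) : finrank F (SRVL (F := F) L) = SRrk L := by
  rw [← range_SRlinComb, LinearMap.finrank_range_of_inj (injective_SRlinComb L),
    Module.finrank_pi_fintype]
  simp [SRrk]

theorem ker_SRpi (L : SRLat ℓ nv K) : LinearMap.ker (SRpi (F := F) L) = SRdual (SRVL L) := by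
  rw [SRdual_eq_orthogonal, ← range_SRlinComb]
  exact (isAdjointPair_SRlinComb_SRpi L).ker_eq_orthogonal_range blockDot_nondegenerate.2

theorem SRrho_add_finrank_inf_SRVL (C : Submodule F (SRAmb ℓ nv F)) (L : SRLat ℓ nv K) :
    SRrho C L + finrank F ↥(C ⊓ SRVL L) = SRrk L := by
  have hmap := Submodule.finrank_map_add_finrank_inf_ker (SRpi L) (SRdual C)
  rw [ker_SRpi, ← SRdual_sup] at hmap
  have hC := finrank_SRdual_add_finrank C
  have hCV := finrank_SRdual_add_finrank (C ⊔ SRVL L)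
  have hsup := Submodule.finrank_sup_add_finrank_inf_eq C (SRVL (F := F) L)
  have hV := finrank_SRVL (F := F) L
  unfold SRrho
  omega

theorem SReta_SRrho (C : Submodule F (SRAmb ℓ nv F)) (L : SRLat ℓ nv K) :
    SReta (fun L => SRrho C L) L = finrank F ↥(C ⊓ SRVL L) := by
  have := SRrho_add_finrank_inf_SRVL C L
  show SRrk L - SRrho C L = _
  omega

theorem exists_SRrk_le_finrank_inf_SRVL_eq (C : Submodule F (SRAmb ℓ nv F)) {r : ℕ}
    {L : SRLat ℓ nv K} (hr : r ≤ finrank F ↥(C ⊓ SRVL L)) :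
    ∃ L' : SRLat ℓ nv K, SRrk L' ≤ SRrk L ∧ finrank F ↥(C ⊓ SRVL L') = r := by
  induction hn : SRrk L generalizing L with
  | zero =>
    have := Submodule.finrank_mono (inf_le_right : C ⊓ SRVL L ≤ SRVL L)
    rw [finrank_SRVL] at this
    exact ⟨L, hn.le, by omega⟩
  | succ n ih =>
    rcases hr.eq_or_lt with heq | hlt
    · exact ⟨L, hn.le, heq.symm⟩
    obtain ⟨L', hle, hrk⟩ := exists_le_SRrk_add_one_eq (L := L) (by omega)
    have hstep := C.finrank_inf_add_finrank_le_of_le (SRVL_mono (F := F) hle)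
    rw [finrank_SRVL, finrank_SRVL] at hstep
    obtain ⟨L'', hrk'', hL''⟩ := ih (L := L') (by omega) (by omega)
    exact ⟨L'', by omega, hL''⟩

end FiniteExtension

theorem stmt11_gw_matroid_eq_gw_code_general
    {ℓ : ℕ} {nv : Fin ℓ → ℕ}
    {F : Type} [Field F]
    {K : Fin ℓ → Type} [∀ i, Field (K i)]
    [∀ i, Algebra (K i) F] [∀ i, FiniteDimensional (K i) F]
    (C : Submodule F (SRAmb ℓ nv F))
    (i : ℕ) :
    SRgw (fun L : SRLat ℓ nv K => SRrho C L) i = SRdgw K C i := by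
  have h := MonotoneOn.csInf_eq_of_subset_of_forall_exists_le (f := id)
    (s := {w | ∃ L : SRLat ℓ nv K, SReta (fun L => SRrho C L) L = i ∧ SRrk L = w})
    (t := {w | ∃ L : SRLat ℓ nv K, i ≤ finrank F ↥(C ⊓ SRVL L) ∧ SRrk L = w})
    (OrderBot.bddBelow _) monotoneOn_id
    (by
      rintro _ ⟨L, hL, rfl⟩
      exact ⟨L, (SReta_SRrho C L ▸ hL).ge, rfl⟩)
    (by
      rintro _ ⟨L, hL, rfl⟩
      obtain ⟨L', hrk, hdim⟩ := exists_SRrk_le_finrank_inf_SRVL_eq C hL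
      exact ⟨_, ⟨L', (SReta_SRrho C L').trans hdim, rfl⟩, hrk⟩)
  simp only [Set.image_id] at h
  exact h

/-- For an `[n,k]` sum-rank metric code `C` with associated
sum-matroid `M_C = (K^n, ρ_C)`, the generalized weights agree:
`d_i(M_C) = d_{SR,i}(C)` for `i = 1, …, k`. -/
theorem stmt11_gw_matroid_eq_gw_code
    {ℓ : ℕ} (hℓ : 0 < ℓ) {nv : Fin ℓ → ℕ} (hnv : ∀ i, 0 < nv i)
    {F : Type} [Field F] [Finite F]
    {K : Fin ℓ → Type} [∀ i, Field (K i)] [∀ i, Finite (K i)]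
    [∀ i, Algebra (K i) F] [∀ i, FiniteDimensional (K i) F]
    (C : Submodule F (SRAmb ℓ nv F)) (k : ℕ) (hk : Module.finrank F C = k)
    (i : ℕ) (hi1 : 1 ≤ i) (hi2 : i ≤ k) :
    SRgw (fun L : SRLat ℓ nv K => SRrho C L) i = SRdgw K C i :=
  stmt11_gw_matroid_eq_gw_code_general C i
end

section
/- Let M = (K^n, ρ) be a sum-matroid of rank k on P(K^n) with n = n_1+⋯+n_ℓ, with dual M*, generalized weights d_r = d_r(M) for 1 ≤ r ≤ n−k and d_j^⊥ = d_j(M*) for 1 ≤ j ≤ k. Fix r with 1 ≤ r ≤ n−k and set t = k + r − d_r. If t ≥ 1, then d_t^⊥ ≤ n − d_r. -/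
open Module

variable {ℓ : ℕ} {nv : Fin ℓ → ℕ} {F : Type} [Field F]
  {K : Fin ℓ → Type} [∀ i, Field (K i)] [∀ i, Algebra (K i) F]

/-! Take `L` realising `d_r`, so that `η(L) = r` and `Rk L = d_r`. Since `L^⊥⊥ = L`, the dual
nullity of `L^⊥` is `η*(L^⊥) = ρ(K^n) − ρ(L) = k + r − d_r`, hence `d_t^⊥ ≤ Rk(L^⊥) = n − d_r`.
That `d_r` is attained at all needs an argument: adding one dimension raises the nullity by at
most one, so the nullity takes every value between `η(0) = 0` and `η(K^n) = n − k`. -/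

section DotProduct

variable {R ι : Type*} [CommRing R] [Fintype ι]

theorem dotProductBilin_isRefl :
    LinearMap.IsRefl (dotProductBilin R R : (ι → R) →ₗ[R] (ι → R) →ₗ[R] R) :=
  fun v w h => by simpa [dotProduct_comm] using h

theorem dotProductBilin_nondegenerate :
    LinearMap.BilinForm.Nondegenerate (dotProductBilin R R : LinearMap.BilinForm R (ι → R)) :=
  dotProductBilin_isRefl.nondegenerate_iff_separatingLeft.mpr fun _ h =>
    dotProduct_eq_zero_iff.mp h

end DotProduct

section Orthogonal

variable {k : Type} [Field k] {m : ℕ}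

theorem SRorth_eq_orthogonal (W : Submodule k (Fin m → k)) :
    SRorth W = LinearMap.BilinForm.orthogonal (dotProductBilin k k) W := by
  ext v
  simp [SRorth, LinearMap.BilinForm.mem_orthogonal_iff, dotProduct, mul_comm]

theorem finrank_SRorth_add (W : Submodule k (Fin m → k)) :
    finrank k (SRorth W) + finrank k W = m := by
  have hW := W.finrank_le
  rw [finrank_fin_fun] at hW
  rw [SRorth_eq_orthogonal, LinearMap.BilinForm.finrank_orthogonal dotProductBilin_nondegenerate,
    finrank_fin_fun, Nat.sub_add_cancel hW]

theorem SRorth_SRorth (W : Submodule k (Fin m → k)) : SRorth (SRorth W) = W := by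
  rw [SRorth_eq_orthogonal, SRorth_eq_orthogonal]
  exact LinearMap.BilinForm.orthogonal_orthogonal dotProductBilin_nondegenerate
    (dotProductBilin_isRefl (R := k) (ι := Fin m)) W

end Orthogonal

section SumMatroid

variable {ℓ : ℕ} {nv : Fin ℓ → ℕ} {K : Fin ℓ → Type} [∀ i, Field (K i)]

theorem SRrk_top : SRrk (⊤ : SRLat ℓ nv K) = ∑ i, nv i := by
  simp [SRrk]

theorem SRrk_le (L : SRLat ℓ nv K) : SRrk L ≤ ∑ i, nv i :=
  SRrk_top (K := K) ▸ Finset.sum_le_sum fun _ _ => Submodule.finrank_mono le_top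

theorem SRlatPerp_SRlatPerp (L : SRLat ℓ nv K) : SRlatPerp (SRlatPerp L) = L :=
  funext fun i => SRorth_SRorth (L i)

theorem SRrk_SRlatPerp_add (L : SRLat ℓ nv K) : SRrk (SRlatPerp L) + SRrk L = ∑ i, nv i := by
  rw [SRrk, SRrk, ← Finset.sum_add_distrib]
  exact Finset.sum_congr rfl fun i _ => finrank_SRorth_add (L i)

theorem SRrk_update_add [DecidableEq (Fin ℓ)] (L : SRLat ℓ nv K) (i : Fin ℓ)
    (W : Submodule (K i) (Fin (nv i) → K i)) :
    SRrk (Function.update L i W) + finrank (K i) (L i) = SRrk L + finrank (K i) W := by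
  have hrest : ∑ j ∈ {i}ᶜ, finrank (K j) (Function.update L i W j) =
      ∑ j ∈ {i}ᶜ, finrank (K j) (L j) :=
    Finset.sum_congr rfl fun j hj => by rw [Function.update_of_ne (by simpa using hj)]
  rw [SRrk, SRrk, Fintype.sum_eq_add_sum_compl i, Fintype.sum_eq_add_sum_compl i, hrest,
    Function.update_self]
  omega

theorem exists_le_SRrk_eq_add_one {L : SRLat ℓ nv K} (hL : L ≠ ⊤) :
    ∃ L', L ≤ L' ∧ SRrk L' = SRrk L + 1 := by
  classical
  obtain ⟨i, hi⟩ := Function.ne_iff.mp hL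
  obtain ⟨v, -, hv⟩ := SetLike.exists_of_lt (lt_top_iff_ne_top.mpr hi)
  refine ⟨Function.update L i (L i ⊔ Submodule.span (K i) {v}),
    le_update_self_iff.mpr le_sup_left, ?_⟩
  have := SRrk_update_add L i (L i ⊔ Submodule.span (K i) {v})
  rw [Submodule.finrank_sup_span_singleton hv] at this
  omega

theorem exists_SReta_eq {ρ : SRLat ℓ nv K → ℕ} (hρ : Monotone ρ) {r : ℕ}
    (hr : r ≤ SReta ρ ⊤) : ∃ L, SReta ρ L = r := by
  set S : Set ℕ := {w | ∃ L : SRLat ℓ nv K, SReta ρ L ≤ r ∧ SRrk L = w}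
  have hbdd : BddAbove S := ⟨∑ i, nv i, by rintro _ ⟨L, -, rfl⟩; exact SRrk_le L⟩
  have hne : S.Nonempty := ⟨0, ⊥, by simp [SReta, SRrk], by simp [SRrk]⟩
  obtain ⟨L, hLr, hLmax⟩ := Nat.sSup_mem hne hbdd
  refine ⟨L, hLr.antisymm (not_lt.mp fun hlt => ?_)⟩
  obtain ⟨L', hLL', hrk⟩ := exists_le_SRrk_eq_add_one (L := L) (by rintro rfl; omega)
  have hmem : SRrk L' ∈ S := ⟨L', by have := hρ hLL'; simp only [SReta] at hlt ⊢; omega, rfl⟩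
  have := le_csSup hbdd hmem
  omega

theorem SRgw_le {ρ : SRLat ℓ nv K → ℕ} {L : SRLat ℓ nv K} {i : ℕ} (h : SReta ρ L = i) :
    SRgw ρ i ≤ SRrk L :=
  Nat.sInf_le ⟨L, h, rfl⟩

theorem exists_SReta_eq_and_SRrk_eq_SRgw {ρ : SRLat ℓ nv K → ℕ} (hρ : Monotone ρ) {r : ℕ}
    (hr : r ≤ SReta ρ ⊤) : ∃ L, SReta ρ L = r ∧ SRrk L = SRgw ρ r := by
  obtain ⟨L, hL⟩ := exists_SReta_eq hρ hr
  have hne : {w | ∃ L : SRLat ℓ nv K, SReta ρ L = r ∧ SRrk L = w}.Nonempty := ⟨_, L, hL, rfl⟩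
  exact Nat.sInf_mem hne

theorem SRdualRk_SRlatPerp (ρ : SRLat ℓ nv K → ℕ) (L : SRLat ℓ nv K) :
    SRdualRk ρ (SRlatPerp L) = ρ L + SRrk (SRlatPerp L) - ρ ⊤ := by
  rw [SRdualRk, SRlatPerp_SRlatPerp]

end SumMatroid

theorem stmt14_dual_gw_le_general
    {ℓ : ℕ} {nv : Fin ℓ → ℕ}
    {K : Fin ℓ → Type} [∀ i, Field (K i)]
    (ρ : SRLat ℓ nv K → ℕ) (hρ : IsSumMatroid ρ)
    (k : ℕ) (hk : ρ (⊤ : SRLat ℓ nv K) = k)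
    (r : ℕ) (hr2 : r ≤ (∑ i, nv i) - k) :
    SRgw (SRdualRk ρ) (k + r - SRgw ρ r) ≤ (∑ i, nv i) - SRgw ρ r := by
  obtain ⟨hρ_le, hρ_mono, -⟩ := hρ
  have hmono : Monotone ρ := fun L L' h => hρ_mono L L' h
  obtain ⟨L, hηL, hRkL⟩ :=
    exists_SReta_eq_and_SRrk_eq_SRgw hmono (r := r) (by rwa [SReta, SRrk_top, hk])
  have ht : SReta (SRdualRk ρ) (SRlatPerp L) = k + r - SRgw ρ r := by
    have hkn : k ≤ ∑ i, nv i := hk ▸ SRrk_top (K := K) ▸ hρ_le ⊤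
    have hρL := hρ_le L
    have hρLk : ρ L ≤ k := hk ▸ hmono le_top
    have hperp := SRrk_SRlatPerp_add L
    rw [SReta] at hηL ⊢
    rw [SRdualRk_SRlatPerp, hk, ← hRkL]
    -- `hr2` and `hkn` keep the truncated subtraction in `SRdualRk` from cutting off
    omega
  calc SRgw (SRdualRk ρ) (k + r - SRgw ρ r) ≤ SRrk (SRlatPerp L) := SRgw_le ht
    _ = (∑ i, nv i) - SRgw ρ r := by have := SRrk_SRlatPerp_add L; omega

/-- For a sum-matroid `M` of rank `k`, fix `1 ≤ r ≤ n − k` and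
set `t = k + r − d_r`.  If `t ≥ 1` then `d_t^⊥ ≤ n − d_r`. -/
theorem stmt14_dual_gw_le
    {ℓ : ℕ} (hℓ : 0 < ℓ) {nv : Fin ℓ → ℕ} (hnv : ∀ i, 0 < nv i)
    {F : Type} [Field F] [Finite F]
    {K : Fin ℓ → Type} [∀ i, Field (K i)] [∀ i, Finite (K i)]
    [∀ i, Algebra (K i) F] [∀ i, FiniteDimensional (K i) F]
    (ρ : SRLat ℓ nv K → ℕ) (hρ : IsSumMatroid ρ)
    (k : ℕ) (hk : ρ (⊤ : SRLat ℓ nv K) = k)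
    (r : ℕ) (hr1 : 1 ≤ r) (hr2 : r ≤ (∑ i, nv i) - k)
    (ht : 1 ≤ k + r - SRgw ρ r) :
    SRgw (SRdualRk ρ) (k + r - SRgw ρ r) ≤ (∑ i, nv i) - SRgw ρ r :=
  stmt14_dual_gw_le_general ρ hρ k hk r hr2
end
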